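/- arXiv:2601.14748 — 5 statements merged into one kernel-verified Lean document; each statement's English description precedes it below -/
import Mathlib

section
/- For the supOU kernel f(x,v) = e^{-xv}, v ≥ 0, x > 0, with f₂(x,u) = x^{-1} e^{-xu} and f₁(x) = x^{-1}: for every p ∈ [1,2], all x > 0 and all t > 0, ∫_0^∞ (f₂(x,u) - f₂(x,t+u))^p du ≤ p^{-1} (min(t, x^{-1}))^p · x^{-1}. -/
open MeasureTheory Real Set

lemma exp_int (c : ℝ) (hc : 0 < c) :
    (∫ u in Ioi (0:ℝ), Real.exp (-(c * u))) = c⁻¹ := by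
  have := integral_comp_mul_left_Ioi (fun y => Real.exp (-y)) 0 hc
  simp only [mul_zero, integral_exp_neg_Ioi, neg_zero, Real.exp_zero, smul_eq_mul,
    mul_one] at this
  simpa using this

theorem stmt3 (p x t : ℝ) (hp1 : 1 ≤ p) (hp2 : p ≤ 2) (hx : 0 < x) (ht : 0 < t) :
    (∫ u in Set.Ioi (0:ℝ),
        (x⁻¹ * Real.exp (-(x * u)) - x⁻¹ * Real.exp (-(x * (t + u)))) ^ p)
      ≤ p⁻¹ * (min t x⁻¹) ^ p * x⁻¹ := by
  have hp0 : 0 < p := lt_of_lt_of_le one_pos hp1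
  set a : ℝ := x⁻¹ * (1 - Real.exp (-(x * t))) with ha
  have hexp_lt : Real.exp (-(x * t)) < 1 := by
    rw [Real.exp_lt_one_iff]
    nlinarith [mul_pos hx ht]
  have ha0 : 0 ≤ a := by
    have := hexp_lt.le
    have : 0 ≤ 1 - Real.exp (-(x * t)) := by linarith
    positivity
  have hamin : a ≤ min t x⁻¹ := by
    rw [le_min_iff]
    constructor
    · -- a ≤ t since 1 - exp(-xt) ≤ xt
      have h := Real.add_one_le_exp (-(x * t))
      have h2 : 1 - Real.exp (-(x * t)) ≤ x * t := by linarith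
      calc a ≤ x⁻¹ * (x * t) := by
              apply mul_le_mul_of_nonneg_left h2 (by positivity)
        _ = t := by field_simp
    · have h2 : 1 - Real.exp (-(x * t)) ≤ 1 := by
        have := Real.exp_pos (-(x * t)); linarith
      calc a ≤ x⁻¹ * 1 := mul_le_mul_of_nonneg_left h2 (by positivity)
        _ = x⁻¹ := mul_one _
  have hrw : ∀ u : ℝ,
      (x⁻¹ * Real.exp (-(x * u)) - x⁻¹ * Real.exp (-(x * (t + u)))) ^ p
        = a ^ p * Real.exp (-((p * x) * u)) := by
    intro u
    have h1 : x⁻¹ * Real.exp (-(x * u)) - x⁻¹ * Real.exp (-(x * (t + u)))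
        = a * Real.exp (-(x * u)) := by
      rw [ha, mul_add, neg_add, Real.exp_add]; ring
    rw [h1, Real.mul_rpow ha0 (Real.exp_pos _).le, ← Real.exp_mul]
    ring_nf
  rw [MeasureTheory.setIntegral_congr_fun measurableSet_Ioi (fun u _ => hrw u),
    MeasureTheory.integral_const_mul, exp_int (p * x) (by positivity)]
  have hap : a ^ p ≤ (min t x⁻¹) ^ p := Real.rpow_le_rpow ha0 hamin hp0.le
  calc a ^ p * (p * x)⁻¹ ≤ (min t x⁻¹) ^ p * (p * x)⁻¹ := by
        apply mul_le_mul_of_nonneg_right hap (by positivity)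
    _ = p⁻¹ * (min t x⁻¹) ^ p * x⁻¹ := by rw [mul_inv]; ring
end

section
/- Let κ > 0 and write f_κ(y) = y^{κ-1} e^{-y} for y > 0. Let h(y) = y^{1-κ} e^y. Then h is strictly increasing on [max(κ-1,0), ∞), its inverse h^← satisfies h^←(z) ~ log z as z → ∞, and ∫_{h^←(z)}^∞ e^{-y} y^{κ-1} dy ~ z^{-1} as z → ∞. -/
/-- `h(y) = y^{1-κ} e^y`. -/
noncomputable def hk (κ y : ℝ) : ℝ := y ^ (1 - κ) * Real.exp y

/-- Generalized inverse of `h` on `[max(κ-1,0), ∞)`. -/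
noncomputable def hkInv (κ z : ℝ) : ℝ := sInf {y : ℝ | max (κ - 1) 0 ≤ y ∧ z ≤ hk κ y}

/-!
Since `log h(y) = y + (1 - κ) log y ~ y`, the inverse of `h` grows like `log`. For the upper
incomplete gamma function `Γ(s, x) = ∫_x^∞ e^{-t} t^{s-1} dt`, integration by parts gives
`Γ(p + 1, x) = e^{-x} x^p + p Γ(p, x)`, and `Γ(p, x) ≤ Γ(p + 1, x) / x`, so
`Γ(κ, x) ~ e^{-x} x^{κ-1} = 1 / h(x)`; evaluating at `x = h^←(z) → ∞` turns the right-hand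
side into `1 / z`.
-/

open Real Filter MeasureTheory Set Asymptotics Topology

section GeneralizedInverse

variable {f : ℝ → ℝ} {a : ℝ}

theorem StrictMonoOn.apply_sInf_setOf_le (hmono : StrictMonoOn f (Ici a))
    (hcont : ContinuousOn f (Ici a)) (htop : Tendsto f atTop atTop) {z : ℝ} (hz : f a ≤ z) :
    a ≤ sInf {y | a ≤ y ∧ z ≤ f y} ∧ f (sInf {y | a ≤ y ∧ z ≤ f y}) = z := by
  obtain ⟨b, hzb, hab⟩ := ((htop.eventually_ge_atTop z).and (eventually_ge_atTop a)).exists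
  obtain ⟨y, ⟨hay, -⟩, hyz⟩ :=
    intermediate_value_Icc hab (hcont.mono Icc_subset_Ici_self) ⟨hz, hzb⟩
  have hleast : IsLeast {y | a ≤ y ∧ z ≤ f y} y :=
    ⟨⟨hay, hyz.ge⟩, fun w ⟨haw, hzw⟩ => (hmono.le_iff_le hay haw).mp (hyz ▸ hzw)⟩
  rw [hleast.csInf_eq]
  exact ⟨hay, hyz⟩

theorem tendsto_sInf_setOf_le_apply_atTop (hmono : StrictMonoOn f (Ici a))
    (hcont : ContinuousOn f (Ici a)) (htop : Tendsto f atTop atTop) :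
    Tendsto (fun z => sInf {y | a ≤ y ∧ z ≤ f y}) atTop atTop := by
  refine tendsto_atTop.mpr fun b => ?_
  filter_upwards [eventually_ge_atTop (f (max b a)), eventually_ge_atTop (f a)] with z hbz haz
  obtain ⟨hay, hyz⟩ := hmono.apply_sInf_setOf_le hcont htop haz
  rw [← hyz, hmono.le_iff_le (le_max_right b a) hay] at hbz
  exact (le_max_left b a).trans hbz

end GeneralizedInverse

section Hk

variable {κ : ℝ}

theorem hasDerivAt_hk {x : ℝ} (hx : 0 < x) :
    HasDerivAt (hk κ) ((x + 1 - κ) * x ^ (-κ) * exp x) x := by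
  have hpow : x ^ (1 - κ) = x * x ^ (-κ) := by
    rw [sub_eq_add_neg, rpow_add hx, rpow_one]
  refine ((hasDerivAt_rpow_const (Or.inl hx.ne')).mul (hasDerivAt_exp x)).congr_deriv ?_
  rw [sub_sub_cancel_left, hpow]
  ring

theorem continuousOn_hk : ContinuousOn (hk κ) (Ici (max (κ - 1) 0)) := by
  refine fun y hy => ((continuousAt_rpow_const y (1 - κ) ?_).mul
    continuous_exp.continuousAt).continuousWithinAt
  rcases (le_max_right _ _).trans (mem_Ici.mp hy) |>.lt_or_eq with hy0 | rfl
  · exact Or.inl hy0.ne'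
  · exact Or.inr (by linarith [le_max_left (κ - 1) 0, mem_Ici.mp hy])

theorem strictMonoOn_hk : StrictMonoOn (hk κ) (Ici (max (κ - 1) 0)) := by
  refine strictMonoOn_of_deriv_pos (convex_Ici _) continuousOn_hk fun x hx => ?_
  obtain ⟨hκx, hx⟩ := max_lt_iff.mp (interior_Ici.subset hx)
  rw [(hasDerivAt_hk hx).deriv]
  have : 0 < x + 1 - κ := by linarith
  positivity

theorem tendsto_hk_atTop : Tendsto (hk κ) atTop atTop := by
  refine (tendsto_exp_div_rpow_atTop (κ - 1)).congr' ?_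
  filter_upwards [eventually_gt_atTop 0] with y hy
  rw [hk, div_eq_inv_mul, ← rpow_neg hy.le, neg_sub]

theorem inv_hk {y : ℝ} (hy : 0 ≤ y) : (hk κ y)⁻¹ = exp (-y) * y ^ (κ - 1) := by
  rw [hk, mul_inv, ← exp_neg, ← rpow_neg hy, neg_sub, mul_comm]

theorem log_hk {y : ℝ} (hy : 0 < y) : log (hk κ y) = (1 - κ) * log y + y := by
  rw [hk, log_mul (rpow_pos_of_pos hy _).ne' (exp_pos y).ne', log_rpow hy, log_exp]

theorem isEquivalent_log_hk : (fun y => log (hk κ y)) ~[atTop] id := by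
  refine IsLittleO.congr' (isLittleO_log_id_atTop.const_mul_left (1 - κ)) ?_ EventuallyEq.rfl
  filter_upwards [eventually_gt_atTop 0] with y hy
  simp only [Pi.sub_apply, log_hk hy, id, add_sub_cancel_right]

theorem hk_hkInv {z : ℝ} (hz : hk κ (max (κ - 1) 0) ≤ z) : hk κ (hkInv κ z) = z :=
  (strictMonoOn_hk.apply_sInf_setOf_le continuousOn_hk tendsto_hk_atTop hz).2

theorem tendsto_hkInv_atTop : Tendsto (hkInv κ) atTop atTop :=
  tendsto_sInf_setOf_le_apply_atTop strictMonoOn_hk continuousOn_hk tendsto_hk_atTop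

theorem hkInv_isEquivalent_log : hkInv κ ~[atTop] log := by
  refine IsEquivalent.symm ?_
  refine ((isEquivalent_log_hk (κ := κ)).comp_tendsto tendsto_hkInv_atTop).congr_left ?_
  filter_upwards [eventually_ge_atTop (hk κ (max (κ - 1) 0))] with z hz
  simp only [Function.comp_apply, hk_hkInv hz]

end Hk

section GammaTail

theorem integrableOn_exp_neg_mul_rpow_Ioi {x : ℝ} (hx : 0 < x) (p : ℝ) :
    IntegrableOn (fun t => exp (-t) * t ^ p) (Ioi x) := by
  refine integrable_of_isBigO_exp_neg one_half_pos
    (fun t ht => ((continuous_exp.comp continuous_neg).continuousAt.mul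
      (continuousAt_rpow_const t p (Or.inl (hx.trans_le ht).ne'))).continuousWithinAt) ?_
  refine ((isBigO_refl (fun t => exp (-t)) atTop).mul
    (isLittleO_rpow_exp_pos_mul_atTop p one_half_pos).isBigO).congr_right fun t => ?_
  rw [← exp_add]
  ring_nf

theorem integral_exp_neg_mul_rpow_Ioi {x : ℝ} (hx : 0 < x) (p : ℝ) :
    ∫ t in Ioi x, exp (-t) * t ^ p =
      exp (-x) * x ^ p + p * ∫ t in Ioi x, exp (-t) * t ^ (p - 1) := by
  have hderiv : ∀ t ∈ Ici x, HasDerivAt (fun t => -(exp (-t) * t ^ p))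
      (exp (-t) * t ^ p - p * (exp (-t) * t ^ (p - 1))) t := fun t ht =>
    (((hasDerivAt_neg t).exp).mul (hasDerivAt_rpow_const
      (Or.inl (hx.trans_le ht).ne'))).neg.congr_deriv (by ring)
  have hdecay : Tendsto (fun t => -(exp (-t) * t ^ p)) atTop (𝓝 0) := by
    simpa [mul_comm] using (tendsto_rpow_mul_exp_neg_mul_atTop_nhds_zero p 1 one_pos).neg
  have hint := integrableOn_exp_neg_mul_rpow_Ioi hx
  have := integral_Ioi_of_hasDerivAt_of_tendsto' hderiv
    ((hint p).sub ((hint (p - 1)).const_mul p)) hdecay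
  rw [integral_sub (hint p) ((hint (p - 1)).const_mul p), integral_const_mul] at this
  linarith

theorem integral_exp_neg_mul_rpow_sub_one_Ioi_le {x : ℝ} (hx : 0 < x) (p : ℝ) :
    ∫ t in Ioi x, exp (-t) * t ^ (p - 1) ≤ x⁻¹ * ∫ t in Ioi x, exp (-t) * t ^ p := by
  rw [← integral_const_mul]
  refine setIntegral_mono_on (integrableOn_exp_neg_mul_rpow_Ioi hx _)
    ((integrableOn_exp_neg_mul_rpow_Ioi hx _).const_mul _) measurableSet_Ioi fun t ht => ?_
  have ht0 : 0 < t := hx.trans ht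
  rw [rpow_sub_one ht0.ne', mul_div_assoc', div_eq_mul_inv, mul_comm x⁻¹]
  gcongr
  exact ht.le

theorem isEquivalent_integral_exp_neg_mul_rpow_Ioi (p : ℝ) :
    (fun x => ∫ t in Ioi x, exp (-t) * t ^ p) ~[atTop] fun x => exp (-x) * x ^ p := by
  set I := fun x => ∫ t in Ioi x, exp (-t) * t ^ p
  have hsmall : (fun x => x⁻¹ * I x) =o[atTop] I := by
    simpa using
      ((isLittleO_one_iff ℝ).mpr tendsto_inv_atTop_zero).mul_isBigO (isBigO_refl I atTop)
  refine IsEquivalent.symm (IsBigO.trans_isLittleO ?_ hsmall)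
  refine IsBigO.of_bound |p| ?_
  filter_upwards [eventually_gt_atTop 0] with x hx
  have hnonneg : ∀ q : ℝ, 0 ≤ ∫ t in Ioi x, exp (-t) * t ^ q := fun q =>
    setIntegral_nonneg measurableSet_Ioi fun t ht => by
      have : 0 < t := hx.trans ht
      positivity
  have hdiff : exp (-x) * x ^ p - I x = -(p * ∫ t in Ioi x, exp (-t) * t ^ (p - 1)) := by
    rw [show I x = _ from integral_exp_neg_mul_rpow_Ioi hx p]
    ring
  rw [Pi.sub_apply, hdiff, norm_neg, norm_mul, norm_mul, Real.norm_of_nonneg (hnonneg _),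
    Real.norm_of_nonneg (inv_pos.mpr hx).le, Real.norm_of_nonneg (hnonneg _), Real.norm_eq_abs]
  exact mul_le_mul_of_nonneg_left (integral_exp_neg_mul_rpow_sub_one_Ioi_le hx p) (abs_nonneg p)

end GammaTail

theorem stmt11_general (κ : ℝ) :
    StrictMonoOn (hk κ) (Set.Ici (max (κ - 1) 0)) ∧
    Asymptotics.IsEquivalent Filter.atTop (hkInv κ) Real.log ∧
    Asymptotics.IsEquivalent Filter.atTop
      (fun z => ∫ y in Set.Ioi (hkInv κ z), Real.exp (-y) * y ^ (κ - 1))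
      (fun z => z⁻¹) := by
  refine ⟨strictMonoOn_hk, hkInv_isEquivalent_log, ?_⟩
  refine ((isEquivalent_integral_exp_neg_mul_rpow_Ioi (κ - 1)).comp_tendsto
    tendsto_hkInv_atTop).trans (EventuallyEq.isEquivalent ?_)
  filter_upwards [eventually_ge_atTop (hk κ (max (κ - 1) 0)),
    tendsto_hkInv_atTop.eventually_ge_atTop 0] with z hz hzInv
  rw [Function.comp_apply, ← inv_hk hzInv, hk_hkInv hz]

theorem stmt11 (κ : ℝ) (hκ : 0 < κ) :
    StrictMonoOn (hk κ) (Set.Ici (max (κ - 1) 0)) ∧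
    Asymptotics.IsEquivalent Filter.atTop (hkInv κ) Real.log ∧
    Asymptotics.IsEquivalent Filter.atTop
      (fun z => ∫ y in Set.Ioi (hkInv κ z), Real.exp (-y) * y ^ (κ - 1))
      (fun z => z⁻¹) :=
  stmt11_general κ
end

section
/- Let κ ∈ (0,1) and f_κ(y) = y^{κ-1} e^{-y} for y > 0. Then as x → ∞, ∫_0^∞ f_κ(y)·1(f_κ(y) > x) dy ~ κ^{-1} x^{-κ/(1-κ)}. -/
/-!
`f_κ(y) = y^(κ-1) e^(-y)` is strictly decreasing on `(0, ∞)`, so `{f_κ > x}` is an interval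
`(0, t)`. Write `x = a^(κ-1)`. From `f_κ(y) ≤ y^(κ-1)` we get `t ≤ a`, and `t ≥ b := a e^(-a/(1-κ))`
because `f_κ(b) ≥ x`. Comparing `f_κ` with `y^(κ-1)` and `e^(-b) y^(κ-1)` on `(0, b)` squeezes the
integral between `e^(-a/(1-κ)) a^κ/κ` and `a^κ/κ`, and `a → 0` as `x → ∞`.
-/

open Real MeasureTheory Set Filter Asymptotics Topology

theorem Asymptotics.IsEquivalent.of_le_of_le {α : Type*} {l : Filter α} {u v w : α → ℝ}
    (huw : u ~[l] w) (hu : ∀ᶠ x in l, u x ≤ v x) (hw : ∀ᶠ x in l, v x ≤ w x) : v ~[l] w := by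
  refine IsBigO.trans_isLittleO (IsBigO.of_bound 1 ?_) huw.isLittleO
  filter_upwards [hu, hw] with x hux hwx
  simp only [Pi.sub_apply, Real.norm_eq_abs, one_mul]
  rw [abs_of_nonpos (by linarith), abs_of_nonpos (by linarith)]
  linarith

noncomputable def gammaIntegrand (κ y : ℝ) : ℝ := y ^ (κ - 1) * exp (-y)

noncomputable def superlevelIntegral (κ x : ℝ) : ℝ :=
  ∫ y in Ioi 0, if x < gammaIntegrand κ y then gammaIntegrand κ y else 0

section

variable {κ a : ℝ}

lemma gammaIntegrand_nonneg (κ : ℝ) {y : ℝ} (hy : 0 ≤ y) : 0 ≤ gammaIntegrand κ y :=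
  mul_nonneg (rpow_nonneg hy _) (exp_pos _).le

lemma gammaIntegrand_le_rpow (κ : ℝ) {y : ℝ} (hy : 0 ≤ y) : gammaIntegrand κ y ≤ y ^ (κ - 1) :=
  mul_le_of_le_one_right (rpow_nonneg hy _) (exp_le_one_iff.2 (neg_nonpos.2 hy))

lemma measurable_gammaIntegrand (κ : ℝ) : Measurable (gammaIntegrand κ) := by
  unfold gammaIntegrand; fun_prop

lemma integrableOn_gammaIntegrand (hκ : 0 < κ) : IntegrableOn (gammaIntegrand κ) (Ioi 0) :=
  (GammaIntegral_convergent hκ).congr_fun (fun _ _ ↦ mul_comm _ _) measurableSet_Ioi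

lemma gammaIntegrand_strictAntiOn (hκ : κ ≤ 1) : StrictAntiOn (gammaIntegrand κ) (Ioi 0) := by
  intro y (hy : 0 < y) z (hz : 0 < z) hyz
  exact mul_lt_mul' (rpow_le_rpow_of_nonpos hy hyz.le (by linarith))
    (exp_lt_exp.2 (neg_lt_neg hyz)) (exp_pos _).le (rpow_pos_of_pos hy _)

lemma integral_Ioo_rpow_sub_one (hκ : 0 < κ) {t : ℝ} (ht : 0 ≤ t) :
    ∫ y in Ioo 0 t, y ^ (κ - 1) = t ^ κ / κ := by
  rw [← integral_Ioc_eq_integral_Ioo, ← intervalIntegral.integral_of_le ht,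
    integral_rpow (Or.inl (by linarith)), sub_add_cancel, zero_rpow hκ.ne', sub_zero]

lemma integral_Ioo_gammaIntegrand_le (hκ : 0 < κ) {t : ℝ} (ht : 0 < t) :
    ∫ y in Ioo 0 t, gammaIntegrand κ y ≤ t ^ κ / κ := by
  rw [← integral_Ioo_rpow_sub_one hκ ht.le]
  exact setIntegral_mono_on ((integrableOn_gammaIntegrand hκ).mono_set Ioo_subset_Ioi_self)
    ((intervalIntegral.integrableOn_Ioo_rpow_iff ht).2 (by linarith)) measurableSet_Ioo
    fun y hy ↦ gammaIntegrand_le_rpow κ hy.1.le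

lemma exp_neg_mul_le_integral_Ioo_gammaIntegrand (hκ : 0 < κ) {t : ℝ} (ht : 0 < t) :
    exp (-t) * (t ^ κ / κ) ≤ ∫ y in Ioo 0 t, gammaIntegrand κ y := by
  rw [← integral_Ioo_rpow_sub_one hκ ht.le, ← integral_const_mul]
  refine setIntegral_mono_on
    (((intervalIntegral.integrableOn_Ioo_rpow_iff ht).2 (by linarith)).const_mul _)
    ((integrableOn_gammaIntegrand hκ).mono_set Ioo_subset_Ioi_self) measurableSet_Ioo
    fun y hy ↦ ?_
  rw [gammaIntegrand, mul_comm]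
  exact mul_le_mul_of_nonneg_left (exp_le_exp.2 (neg_le_neg hy.2.le)) (rpow_nonneg hy.1.le _)

lemma setIntegral_gammaIntegrand_mono (hκ : 0 < κ) {s t : Set ℝ} (hst : s ⊆ t) (ht : t ⊆ Ioi 0)
    (ht' : MeasurableSet t) : ∫ y in s, gammaIntegrand κ y ≤ ∫ y in t, gammaIntegrand κ y :=
  setIntegral_mono_set ((integrableOn_gammaIntegrand hκ).mono_set ht)
    ((ae_restrict_iff' ht').2 (.of_forall fun _ hy ↦ gammaIntegrand_nonneg κ (ht hy).le))
    hst.eventuallyLE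

lemma superlevelIntegral_eq_setIntegral (κ x : ℝ) :
    superlevelIntegral κ x = ∫ y in Ioi 0 ∩ {y | x < gammaIntegrand κ y}, gammaIntegrand κ y :=
  setIntegral_indicator (measurableSet_lt measurable_const (measurable_gammaIntegrand κ))

lemma mul_exp_neg_div_le (hκ : κ < 1) (ha : 0 ≤ a) : a * exp (-a / (1 - κ)) ≤ a :=
  mul_le_of_le_one_right ha <|
    exp_le_one_iff.2 (div_nonpos_of_nonpos_of_nonneg (by linarith) (by linarith))

lemma superlevelSet_subset_Ioo (hκ : κ < 1) (ha : 0 < a) :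
    Ioi 0 ∩ {y | a ^ (κ - 1) < gammaIntegrand κ y} ⊆ Ioo 0 a := by
  rintro y ⟨hy : 0 < y, hay : a ^ (κ - 1) < gammaIntegrand κ y⟩
  exact ⟨hy, (rpow_lt_rpow_iff_of_neg ha hy (by linarith)).1
    (hay.trans_le (gammaIntegrand_le_rpow κ hy.le))⟩

lemma Ioo_subset_superlevelSet (hκ : κ < 1) (ha : 0 < a) :
    Ioo 0 (a * exp (-a / (1 - κ))) ⊆ Ioi 0 ∩ {y | a ^ (κ - 1) < gammaIntegrand κ y} := by
  have hκ' : 1 - κ ≠ 0 := by linarith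
  set b := a * exp (-a / (1 - κ))
  have hb : 0 < b := by positivity
  -- `b` is chosen so that `b ^ (κ - 1) = a ^ (κ - 1) * exp a`, which absorbs `exp (-b) ≥ exp (-a)`.
  have hbκ : b ^ (κ - 1) = a ^ (κ - 1) * exp a := by
    rw [mul_rpow ha.le (exp_pos _).le, ← exp_mul]
    congr 2
    field_simp
    ring
  have hfb : a ^ (κ - 1) ≤ gammaIntegrand κ b :=
    calc a ^ (κ - 1) = a ^ (κ - 1) * exp a * exp (-a) := by
          rw [mul_assoc, ← exp_add, add_neg_cancel, exp_zero, mul_one]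
      _ ≤ gammaIntegrand κ b := by
          rw [gammaIntegrand, hbκ]
          gcongr
          exact mul_exp_neg_div_le hκ ha.le
  rintro y ⟨hy, hyb⟩
  exact ⟨hy, hfb.trans_lt (gammaIntegrand_strictAntiOn hκ.le hy hb hyb)⟩

lemma superlevelIntegral_rpow_le (hκ0 : 0 < κ) (hκ1 : κ < 1) (ha : 0 < a) :
    superlevelIntegral κ (a ^ (κ - 1)) ≤ a ^ κ / κ := by
  rw [superlevelIntegral_eq_setIntegral]
  exact (setIntegral_gammaIntegrand_mono hκ0 (superlevelSet_subset_Ioo hκ1 ha)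
    Ioo_subset_Ioi_self measurableSet_Ioo).trans (integral_Ioo_gammaIntegrand_le hκ0 ha)

lemma exp_neg_div_mul_le_superlevelIntegral_rpow (hκ0 : 0 < κ) (hκ1 : κ < 1) (ha : 0 < a) :
    exp (-a / (1 - κ)) * (a ^ κ / κ) ≤ superlevelIntegral κ (a ^ (κ - 1)) := by
  set b := a * exp (-a / (1 - κ)) with hb_def
  have hb : 0 < b := by positivity
  have hbκ : exp (-a / (1 - κ)) * (a ^ κ / κ) = exp (-a) * (b ^ κ / κ) := by
    have hκ' : 1 - κ ≠ 0 := by linarith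
    have hsplit : exp (-a / (1 - κ)) = exp (-a) * exp (-a / (1 - κ) * κ) := by
      rw [← exp_add]
      congr 1
      field_simp
      ring
    rw [hb_def, mul_rpow ha.le (exp_pos _).le, ← exp_mul, hsplit]
    ring
  rw [superlevelIntegral_eq_setIntegral, hbκ]
  calc exp (-a) * (b ^ κ / κ) ≤ exp (-b) * (b ^ κ / κ) := by
        gcongr
        exact mul_exp_neg_div_le hκ1 ha.le
    _ ≤ ∫ y in Ioo 0 b, gammaIntegrand κ y := exp_neg_mul_le_integral_Ioo_gammaIntegrand hκ0 hb
    _ ≤ _ := setIntegral_gammaIntegrand_mono hκ0 (Ioo_subset_superlevelSet hκ1 ha)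
          inter_subset_left
          (measurableSet_Ioi.inter <|
            measurableSet_lt measurable_const (measurable_gammaIntegrand κ))

lemma superlevelIntegral_rpow_isEquivalent (hκ0 : 0 < κ) (hκ1 : κ < 1) :
    (fun a ↦ superlevelIntegral κ (a ^ (κ - 1))) ~[𝓝[>] 0] fun a ↦ a ^ κ / κ := by
  have hexp : Tendsto (fun a ↦ exp (-a / (1 - κ))) (𝓝[>] 0) (𝓝 1) := by
    have h := ((continuous_exp.comp ((continuous_neg.div_const (1 - κ)))).tendsto 0).mono_left
      (nhdsWithin_le_nhds (s := Ioi 0))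
    simpa [Function.comp_def] using h
  have hlower : (fun a ↦ exp (-a / (1 - κ)) * (a ^ κ / κ)) ~[𝓝[>] 0] fun a ↦ a ^ κ / κ := by
    have h := ((isEquivalent_const_iff_tendsto one_ne_zero).2 hexp).mul
      (IsEquivalent.refl (u := fun a : ℝ ↦ a ^ κ / κ))
    simp only [Pi.mul_def, Function.const_apply, one_mul] at h
    exact h
  refine hlower.of_le_of_le ?_ ?_ <;> filter_upwards [self_mem_nhdsWithin] with a ha
  · exact exp_neg_div_mul_le_superlevelIntegral_rpow hκ0 hκ1 ha
  · exact superlevelIntegral_rpow_le hκ0 hκ1 ha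

end

theorem stmt12 (κ : ℝ) (hκ0 : 0 < κ) (hκ1 : κ < 1) :
    Asymptotics.IsEquivalent Filter.atTop
      (fun x => ∫ y in Set.Ioi (0:ℝ),
        (if x < y ^ (κ - 1) * Real.exp (-y) then y ^ (κ - 1) * Real.exp (-y) else 0))
      (fun x => κ⁻¹ * x ^ (-κ / (1 - κ))) := by
  have hκ : 1 - κ ≠ 0 := by linarith
  have ha : Tendsto (fun x : ℝ ↦ x ^ (-(1 - κ)⁻¹)) atTop (𝓝[>] 0) :=
    tendsto_nhdsWithin_iff.2 ⟨tendsto_rpow_neg_atTop (inv_pos.2 (by linarith)),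
      (eventually_gt_atTop 0).mono fun x hx ↦ rpow_pos_of_pos hx _⟩
  have h := (superlevelIntegral_rpow_isEquivalent hκ0 hκ1).comp_tendsto ha
  refine (h.congr_left ?_).congr_right ?_ <;> filter_upwards [eventually_gt_atTop 0] with x hx <;>
    simp only [Function.comp_apply, ← rpow_mul hx.le]
  · rw [show -(1 - κ)⁻¹ * (κ - 1) = 1 by field_simp; ring, rpow_one]
    rfl
  · rw [show -(1 - κ)⁻¹ * κ = -κ / (1 - κ) by ring, div_eq_inv_mul]
end

section
/- For κ > 0, the integral ∫_0^∞ ∫_{|z|>1} min(|z| y^{κ-1} e^{-y}, 1) λ(dz) dy is finite if and only if ∫_{|z|>1} log|z| λ(dz) < ∞, for any Lévy measure λ (i.e. σ-finite measure on ℝ\{0} with ∫ min(1,z²) λ(dz) < ∞). -/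
/-!
By Tonelli the double integral equals `∫_{|z|>1} G(|z|) λ(dz)` with
`G(a) = ∫_0^∞ min(a y^{κ-1} e^{-y}, 1) dy`, and `G(a)` is comparable to `log a` for `a > 1`:
the integrand equals `1` on `[1, (log a)/2]`, while beyond `y = 2 log a` it is bounded by
`y^{κ-1} e^{-y/2}`, which is integrable. Since a Lévy measure gives finite mass to
`{|z| > 1}`, the additive constants in these comparisons do not affect finiteness.
-/

open MeasureTheory Set Real
open scoped ENNReal

lemma lintegral_ne_top_of_le_mul_add {α : Type*} [MeasurableSpace α] {μ : Measure α}
    [IsFiniteMeasure μ] {f g : α → ℝ≥0∞} {c d : ℝ≥0∞} (hc : c ≠ ⊤) (hd : d ≠ ⊤)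
    (hfg : ∀ᵐ x ∂μ, f x ≤ c * g x + d) (hg : ∫⁻ x, g x ∂μ ≠ ⊤) :
    ∫⁻ x, f x ∂μ ≠ ⊤ := by
  refine ne_top_of_le_ne_top ?_ (lintegral_mono_ae hfg)
  rw [lintegral_add_right _ measurable_const, lintegral_const_mul' _ _ hc, lintegral_const]
  exact ENNReal.add_ne_top.2 ⟨ENNReal.mul_ne_top hc hg, ENNReal.mul_ne_top hd (measure_ne_top _ _)⟩

lemma measure_one_lt_abs_ne_top {μ : Measure ℝ}
    (hμ : ∫⁻ z, ENNReal.ofReal (min 1 (z ^ 2)) ∂μ ≠ ⊤) : μ {z | 1 < |z|} ≠ ⊤ := by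
  refine ne_top_of_le_ne_top hμ ?_
  calc μ {z | 1 < |z|} ≤ μ {z | 1 ≤ ENNReal.ofReal (min 1 (z ^ 2))} := by
        refine measure_mono fun z (hz : 1 < |z|) => ?_
        simpa using hz.le
    _ ≤ ∫⁻ z, ENNReal.ofReal (min 1 (z ^ 2)) ∂μ := by
        simpa only [one_mul] using mul_meas_ge_le_lintegral₀ (by fun_prop) 1

lemma one_le_mul_rpow_mul_exp_neg {κ a y : ℝ} (hκ : 0 < κ) (ha : 0 < a) (hy : 1 ≤ y)
    (hya : 2 * y ≤ log a) : 1 ≤ a * y ^ (κ - 1) * exp (-y) := by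
  have h_exp_le_a : exp (2 * y) ≤ a := (le_log_iff_exp_le ha).1 hya
  have h_exp_le_rpow : exp (-y) ≤ y ^ (κ - 1) :=
    calc exp (-y) ≤ y⁻¹ := by
          rw [exp_neg]
          exact inv_anti₀ (by positivity) (by linarith [add_one_le_exp y])
      _ = y ^ (-1 : ℝ) := (rpow_neg_one y).symm
      _ ≤ y ^ (κ - 1) := rpow_le_rpow_of_exponent_le hy (by linarith)
  calc (1 : ℝ) = exp (2 * y) * exp (-y) * exp (-y) := by
        rw [← exp_add, ← exp_add]; ring_nf; exact exp_zero.symm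
    _ ≤ a * y ^ (κ - 1) * exp (-y) := by gcongr

lemma ofReal_min_le_indicator_add {κ a y : ℝ} (ha : 0 < a) (hy : 0 ≤ y) :
    ENNReal.ofReal (min (a * y ^ (κ - 1) * exp (-y)) 1) ≤
      (Iic (2 * log a)).indicator 1 y + ENNReal.ofReal (y ^ (κ - 1) * exp (-(y / 2))) := by
  by_cases h : y ∈ Iic (2 * log a)
  · rw [indicator_of_mem h, Pi.one_apply]
    exact (ENNReal.ofReal_le_one.2 (min_le_right _ _)).trans le_self_add
  · rw [indicator_of_notMem h, zero_add]
    rw [mem_Iic, not_le] at h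
    -- past `y = 2 log a` the factor `a` is absorbed by half of the exponential decay
    refine ENNReal.ofReal_le_ofReal ((min_le_left _ _).trans ?_)
    have h_decay : a * exp (-y) ≤ exp (-(y / 2)) :=
      calc a * exp (-y) ≤ exp (y / 2) * exp (-y) := by
            gcongr
            rw [← exp_log ha]
            exact exp_le_exp.2 (by linarith)
        _ = exp (-(y / 2)) := by rw [← exp_add]; ring_nf
    calc a * y ^ (κ - 1) * exp (-y) = y ^ (κ - 1) * (a * exp (-y)) := by ring
      _ ≤ y ^ (κ - 1) * exp (-(y / 2)) := by gcongr

lemma setLIntegral_rpow_mul_exp_neg_half_ne_top {κ : ℝ} (hκ : 0 < κ) :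
    ∫⁻ y in Ioi 0, ENNReal.ofReal (y ^ (κ - 1) * exp (-(y / 2))) ≠ ⊤ := by
  have := (integrableOn_rpow_mul_exp_neg_mul_rpow (s := κ - 1) (b := 1 / 2)
    (by linarith) one_pos (by norm_num)).setLIntegral_lt_top
  simp only [rpow_one] at this
  convert this.ne using 6
  ring

noncomputable def truncatedGammaLIntegral (κ a : ℝ) : ℝ≥0∞ :=
  ∫⁻ y in Ioi 0, ENNReal.ofReal (min (a * y ^ (κ - 1) * exp (-y)) 1)

lemma ofReal_log_le_truncatedGammaLIntegral {κ a : ℝ} (hκ : 0 < κ) (ha : 1 < a) :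
    ENNReal.ofReal (log a) ≤ 2 * truncatedGammaLIntegral κ a + 2 := by
  have h_interval : ENNReal.ofReal (log a / 2 - 1) ≤ truncatedGammaLIntegral κ a :=
    calc ENNReal.ofReal (log a / 2 - 1) = ∫⁻ _ in Ioc 1 (log a / 2), 1 := by
          rw [setLIntegral_one, volume_Ioc]
      _ ≤ ∫⁻ y in Ioc 1 (log a / 2), ENNReal.ofReal (min (a * y ^ (κ - 1) * exp (-y)) 1) :=
          setLIntegral_mono' measurableSet_Ioc fun y hy => by
            rw [min_eq_right (one_le_mul_rpow_mul_exp_neg hκ (by linarith) hy.1.le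
              (by linarith [hy.2])), ENNReal.ofReal_one]
      _ ≤ truncatedGammaLIntegral κ a :=
          lintegral_mono_set fun y hy => zero_lt_one.trans hy.1
  calc ENNReal.ofReal (log a) = ENNReal.ofReal (2 * (log a / 2 - 1) + 2) := by ring_nf
    _ ≤ ENNReal.ofReal (2 * (log a / 2 - 1)) + ENNReal.ofReal 2 := ENNReal.ofReal_add_le
    _ = 2 * ENNReal.ofReal (log a / 2 - 1) + 2 := by
        rw [ENNReal.ofReal_mul zero_le_two, ENNReal.ofReal_ofNat]
    _ ≤ 2 * truncatedGammaLIntegral κ a + 2 := by gcongr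

lemma truncatedGammaLIntegral_le {κ a : ℝ} (ha : 0 < a) :
    truncatedGammaLIntegral κ a ≤
      2 * ENNReal.ofReal (log a) + ∫⁻ y in Ioi 0, ENNReal.ofReal (y ^ (κ - 1) * exp (-(y / 2))) :=
  calc truncatedGammaLIntegral κ a
      ≤ ∫⁻ y in Ioi 0, ((Iic (2 * log a)).indicator 1 y +
          ENNReal.ofReal (y ^ (κ - 1) * exp (-(y / 2)))) :=
        setLIntegral_mono' measurableSet_Ioi fun y hy => ofReal_min_le_indicator_add ha hy.le
    _ = 2 * ENNReal.ofReal (log a) +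
          ∫⁻ y in Ioi 0, ENNReal.ofReal (y ^ (κ - 1) * exp (-(y / 2))) := by
        rw [lintegral_add_left (measurable_one.indicator measurableSet_Iic),
          lintegral_indicator_one measurableSet_Iic, Measure.restrict_apply measurableSet_Iic,
          Iic_inter_Ioi, volume_Ioc, sub_zero, ENNReal.ofReal_mul zero_le_two,
          ENNReal.ofReal_ofNat]

theorem stmt14_general (κ : ℝ) (hκ : 0 < κ) (lam : MeasureTheory.Measure ℝ)
    (hlevy : (∫⁻ z, ENNReal.ofReal (min 1 (z ^ 2)) ∂lam) ≠ ⊤) :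
    ((∫⁻ y in Set.Ioi (0:ℝ), ∫⁻ z in {z : ℝ | 1 < |z|},
        ENNReal.ofReal (min (|z| * y ^ (κ - 1) * Real.exp (-y)) 1) ∂lam) ≠ ⊤) ↔
    ((∫⁻ z in {z : ℝ | 1 < |z|}, ENNReal.ofReal (Real.log |z|) ∂lam) ≠ ⊤) := by
  set S : Set ℝ := {z : ℝ | 1 < |z|}
  have hS : MeasurableSet S := measurableSet_lt measurable_const measurable_id.abs
  have : IsFiniteMeasure (lam.restrict S) :=
    ⟨by simpa using (measure_one_lt_abs_ne_top hlevy).lt_top⟩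
  rw [lintegral_lintegral_swap (by fun_prop)]
  constructor
  · exact lintegral_ne_top_of_le_mul_add (by norm_num) (by norm_num)
      (ae_restrict_of_forall_mem hS fun z hz => ofReal_log_le_truncatedGammaLIntegral hκ hz)
  · exact lintegral_ne_top_of_le_mul_add (by norm_num)
      (setLIntegral_rpow_mul_exp_neg_half_ne_top hκ)
      (ae_restrict_of_forall_mem hS fun z hz => truncatedGammaLIntegral_le (one_pos.trans hz))

theorem stmt14 (κ : ℝ) (hκ : 0 < κ) (lam : MeasureTheory.Measure ℝ)
    [MeasureTheory.SigmaFinite lam] (hlam0 : lam {0} = 0)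
    (hlevy : (∫⁻ z, ENNReal.ofReal (min 1 (z ^ 2)) ∂lam) ≠ ⊤) :
    ((∫⁻ y in Set.Ioi (0:ℝ), ∫⁻ z in {z : ℝ | 1 < |z|},
        ENNReal.ofReal (min (|z| * y ^ (κ - 1) * Real.exp (-y)) 1) ∂lam) ≠ ⊤) ↔
    ((∫⁻ z in {z : ℝ | 1 < |z|}, ENNReal.ofReal (Real.log |z|) ∂lam) ≠ ⊤) :=
  stmt14_general κ hκ lam hlevy
end

section
/- Let κ > 0 and p ≥ 1 with κ > 1 - 1/p. Then lim_{t ↓ 0} t^{-p} ∫_0^∞ (∫_s^{t+s} y^{κ-1} e^{-y} dy)^p ds = ∫_0^∞ (s^{κ-1} e^{-s})^p ds < ∞, and consequently there exists c_p > 0 such that ∫_0^∞ (∫_s^{t+s} y^{κ-1} e^{-y} dy)^p ds ≤ c_p (min(t,1))^p for all t > 0. -/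
/-!
Write `f(y) = y^a e^{-y}` with `a = κ - 1`. By the fundamental theorem of calculus,
`t⁻¹ ∫_s^{s+t} f → f(s)` for every `s > 0`. For `t ≤ 1` this average is at most the
supremum of `f` over `(s, s + 1]`, which is `≤ 2^|a| (s^a + 1) e^{-s}`; that bound lies in
`L^p(0, ∞)` as soon as `a p > -1`, so dominated convergence gives the limit, and integrating
the same bound gives `∫ (∫_s^{s+t} f)^p ds ≤ B t^p` for `t ≤ 1`. For large `t`, the estimate
`e^{-y} ≤ e^{-s/2} e^{-y/2}` on `y ≥ s` gives `∫_s^{s+t} f ≤ C e^{-s/2}` uniformly in `t`,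
whose `p`-th power is integrable.
-/

open MeasureTheory Set Filter Real Topology

/-- `γ(a + 1, t + s) - γ(a + 1, s)`, an increment of the lower incomplete gamma function. -/
noncomputable def gammaIncrement (a t s : ℝ) : ℝ := ∫ y in Ioc s (t + s), y ^ a * exp (-y)

theorem tendsto_inv_mul_setIntegral_Ioc {f : ℝ → ℝ} {s : ℝ}
    (hmeas : StronglyMeasurableAtFilter f (𝓝 s)) (hfs : ContinuousAt f s) :
    Tendsto (fun t => t⁻¹ * ∫ y in Ioc s (t + s), f y) (𝓝[>] 0) (𝓝 (f s)) := by
  have hderiv := (intervalIntegral.integral_hasDerivAt_right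
    (IntervalIntegrable.refl (a := s)) hmeas hfs).tendsto_slope_zero_right
  refine hderiv.congr' ?_
  filter_upwards [self_mem_nhdsWithin] with t (ht : 0 < t)
  rw [intervalIntegral.integral_same, sub_zero, smul_eq_mul,
    intervalIntegral.integral_of_le (by linarith), add_comm]

section

variable {a p s t y : ℝ}

theorem rpow_mul_exp_neg_rpow (hs : 0 ≤ s) :
    (s ^ a * exp (-s)) ^ p = s ^ (a * p) * exp (-p * s) := by
  rw [mul_rpow (rpow_nonneg hs a) (exp_pos _).le, ← rpow_mul hs, ← exp_mul]
  ring_nf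

theorem integrableOn_rpow_mul_exp_neg_rpow_const (hp : 0 < p) (hap : -1 < a * p) :
    IntegrableOn (fun s : ℝ => (s ^ a * exp (-s)) ^ p) (Ioi 0) := by
  have h := integrableOn_rpow_mul_exp_neg_mul_rpow hap zero_lt_one hp
  simp only [rpow_one] at h
  exact h.congr_fun (fun s hs => (rpow_mul_exp_neg_rpow (le_of_lt hs)).symm) measurableSet_Ioi

theorem memLp_rpow_mul_exp_neg (hp : 0 < p) (hap : -1 < a * p) :
    MemLp (fun s : ℝ => s ^ a * exp (-s)) (ENNReal.ofReal p) (volume.restrict (Ioi 0)) := by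
  rw [← integrable_norm_rpow_iff (by fun_prop) (by simpa using hp) ENNReal.ofReal_ne_top,
    ENNReal.toReal_ofReal hp.le]
  refine (integrableOn_rpow_mul_exp_neg_rpow_const hp hap).congr_fun (fun s hs => ?_)
    measurableSet_Ioi
  rw [norm_of_nonneg (mul_nonneg (rpow_nonneg (le_of_lt hs) a) (exp_pos _).le)]

theorem continuousOn_rpow_mul_exp_neg :
    ContinuousOn (fun y : ℝ => y ^ a * exp (-y)) (Ioi 0) :=
  (continuousOn_id.rpow_const fun _ hy => Or.inl (ne_of_gt hy)).mul (by fun_prop)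

theorem rpow_le_two_rpow_abs_mul (hs : 0 < s) (hsy : s ≤ y) (hys : y ≤ s + 1) :
    y ^ a ≤ 2 ^ |a| * (s ^ a + 1) := by
  have hsa : 0 ≤ s ^ a := rpow_nonneg hs.le a
  rcases le_total a 0 with ha | ha
  · have h2 : 1 ≤ (2:ℝ) ^ |a| := one_le_rpow (by norm_num) (abs_nonneg a)
    calc y ^ a ≤ s ^ a := rpow_le_rpow_of_nonpos hs hsy ha
      _ ≤ 1 * (s ^ a + 1) := by linarith
      _ ≤ 2 ^ |a| * (s ^ a + 1) := by gcongr
  · rw [abs_of_nonneg ha]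
    have hy : y ^ a ≤ (s + 1) ^ a := rpow_le_rpow (by linarith) hys ha
    have h2 : (0:ℝ) ≤ 2 ^ a := rpow_nonneg (by norm_num) a
    rcases le_total s 1 with hs1 | hs1
    · have : (s + 1) ^ a ≤ 2 ^ a := rpow_le_rpow (by linarith) (by linarith) ha
      nlinarith
    · have : (s + 1) ^ a ≤ 2 ^ a * s ^ a := by
        rw [← mul_rpow (by norm_num) hs.le]
        exact rpow_le_rpow (by linarith) (by linarith) ha
      nlinarith

theorem gammaIncrement_nonneg (hs : 0 ≤ s) : 0 ≤ gammaIncrement a t s :=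
  setIntegral_nonneg measurableSet_Ioc fun _ hy =>
    mul_nonneg (rpow_nonneg (hs.trans hy.1.le) a) (exp_pos _).le

theorem continuousOn_gammaIncrement (ht : 0 ≤ t) :
    ContinuousOn (gammaIncrement a t) (Ioi 0) := by
  have hcont := continuousOn_rpow_mul_exp_neg (a := a)
  have hii : ∀ u ∈ Ioi (0:ℝ),
      IntervalIntegrable (fun y : ℝ => y ^ a * exp (-y)) volume 1 u := fun u hu =>
    (hcont.mono (ordConnected_Ioi.uIcc_subset (mem_Ioi.2 one_pos) hu)).intervalIntegrable
  have hprim : ContinuousOn (fun u => ∫ y in (1:ℝ)..u, y ^ a * exp (-y)) (Ioi 0) := fun u hu =>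
    (intervalIntegral.integral_hasDerivAt_right (hii u hu)
      (hcont.stronglyMeasurableAtFilter isOpen_Ioi u hu)
      (hcont.continuousAt (isOpen_Ioi.mem_nhds hu))).continuousAt.continuousWithinAt
  have hshift : MapsTo (t + ·) (Ioi 0) (Ioi (0:ℝ)) := fun s (hs : 0 < s) =>
    show 0 < t + s by linarith
  refine ((hprim.comp (continuousOn_const.add continuousOn_id) hshift).sub hprim).congr
    fun s (hs : 0 < s) => ?_
  change gammaIncrement a t s = (∫ y in (1:ℝ)..t + s, _) - ∫ y in (1:ℝ)..s, _
  rw [intervalIntegral.integral_interval_sub_left (hii _ (hshift hs)) (hii s hs),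
    intervalIntegral.integral_of_le (by linarith), gammaIncrement]

theorem gammaIncrement_le_mul (hs : 0 < s) (ht : 0 ≤ t) (ht1 : t ≤ 1) :
    gammaIncrement a t s ≤ t * (2 ^ |a| * (s ^ a * exp (-s) + exp (-s))) := by
  have hbound : ∀ y ∈ Ioc s (t + s),
      ‖y ^ a * exp (-y)‖ ≤ 2 ^ |a| * (s ^ a * exp (-s) + exp (-s)) := by
    rintro y ⟨hsy, hyt⟩
    rw [norm_of_nonneg (mul_nonneg (rpow_nonneg (hs.trans hsy).le a) (exp_pos _).le)]
    calc y ^ a * exp (-y) ≤ 2 ^ |a| * (s ^ a + 1) * exp (-s) :=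
          mul_le_mul (rpow_le_two_rpow_abs_mul hs hsy.le (by linarith))
            (exp_le_exp.mpr (by linarith)) (exp_pos _).le (by positivity)
      _ = 2 ^ |a| * (s ^ a * exp (-s) + exp (-s)) := by ring
  calc gammaIncrement a t s ≤ ‖gammaIncrement a t s‖ := le_norm_self _
    _ ≤ _ := norm_setIntegral_le_of_norm_le_const measure_Ioc_lt_top hbound
    _ = _ := by rw [volume_real_Ioc_of_le (by linarith), add_sub_cancel_right, mul_comm]

theorem rpow_neg_mul_gammaIncrement_rpow_le (hp : 0 < p) (hs : 0 < s) (ht : 0 < t)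
    (ht1 : t ≤ 1) :
    t ^ (-p) * gammaIncrement a t s ^ p ≤ (2 ^ |a| * (s ^ a * exp (-s) + exp (-s))) ^ p := by
  have hI := gammaIncrement_nonneg (a := a) (t := t) hs.le
  rw [rpow_neg ht.le, inv_mul_le_iff₀ (rpow_pos_of_pos ht p), ← mul_rpow ht.le (by positivity)]
  exact rpow_le_rpow hI (gammaIncrement_le_mul hs ht.le ht1) hp.le

theorem integrableOn_gammaIncrement_dominant (hp : 0 < p) (hap : -1 < a * p) :
    IntegrableOn (fun s : ℝ => (2 ^ |a| * (s ^ a * exp (-s) + exp (-s))) ^ p) (Ioi 0) := by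
  have hexp : MemLp (fun s : ℝ => exp (-s)) (ENNReal.ofReal p) (volume.restrict (Ioi 0)) := by
    simpa using memLp_rpow_mul_exp_neg (a := 0) hp (by simp)
  have h := (((memLp_rpow_mul_exp_neg hp hap).add hexp).const_mul (2 ^ |a|)).integrable_norm_rpow
    (by simpa using hp) ENNReal.ofReal_ne_top
  rw [ENNReal.toReal_ofReal hp.le] at h
  refine IntegrableOn.congr_fun h (fun s (hs : 0 < s) => ?_) measurableSet_Ioi
  rw [Pi.add_apply, norm_of_nonneg (by positivity)]

theorem tendsto_rpow_neg_mul_integral_gammaIncrement_rpow (hp : 0 < p) (hap : -1 < a * p) :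
    Tendsto (fun t => t ^ (-p) * ∫ s in Ioi 0, gammaIncrement a t s ^ p) (𝓝[>] 0)
      (𝓝 (∫ s in Ioi 0, (s ^ a * exp (-s)) ^ p)) := by
  have hcont := continuousOn_rpow_mul_exp_neg (a := a)
  simp only [← integral_const_mul]
  refine tendsto_integral_filter_of_dominated_convergence _ ?_ ?_
    (integrableOn_gammaIncrement_dominant hp hap) ?_
  · filter_upwards [self_mem_nhdsWithin] with t (ht : 0 < t)
    exact (continuousOn_const.mul ((continuousOn_gammaIncrement ht.le).rpow_const
      fun _ _ => Or.inr hp.le)).aestronglyMeasurable measurableSet_Ioi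
  · filter_upwards [Ioc_mem_nhdsGT zero_lt_one] with t ⟨ht, ht1⟩
    filter_upwards [self_mem_ae_restrict measurableSet_Ioi] with s (hs : 0 < s)
    rw [norm_of_nonneg (by have := gammaIncrement_nonneg (a := a) (t := t) hs.le; positivity)]
    exact rpow_neg_mul_gammaIncrement_rpow_le hp hs ht ht1
  · filter_upwards [self_mem_ae_restrict measurableSet_Ioi] with s (hs : 0 < s)
    have hlim := (tendsto_inv_mul_setIntegral_Ioc
      (hcont.stronglyMeasurableAtFilter isOpen_Ioi s hs)
      (hcont.continuousAt (isOpen_Ioi.mem_nhds hs))).rpow_const (p := p) (Or.inr hp.le)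
    refine hlim.congr' ?_
    filter_upwards [self_mem_nhdsWithin] with t (ht : 0 < t)
    change (t⁻¹ * gammaIncrement a t s) ^ p = _
    rw [mul_rpow (inv_nonneg.mpr ht.le) (gammaIncrement_nonneg hs.le), inv_rpow ht.le,
      rpow_neg ht.le]

theorem exists_integral_gammaIncrement_rpow_le_mul_rpow (hp : 0 < p) (hap : -1 < a * p) :
    ∃ B, ∀ t ∈ Ioc (0:ℝ) 1, ∫ s in Ioi 0, gammaIncrement a t s ^ p ≤ B * t ^ p := by
  refine ⟨∫ s in Ioi 0, (2 ^ |a| * (s ^ a * exp (-s) + exp (-s))) ^ p,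
    fun t ⟨ht, ht1⟩ => ?_⟩
  have h : ∫ s in Ioi 0, t ^ (-p) * gammaIncrement a t s ^ p
      ≤ ∫ s in Ioi 0, (2 ^ |a| * (s ^ a * exp (-s) + exp (-s))) ^ p := by
    refine integral_mono_of_nonneg ?_ (integrableOn_gammaIncrement_dominant hp hap) ?_ <;>
      filter_upwards [self_mem_ae_restrict measurableSet_Ioi] with s (hs : 0 < s)
    · have := gammaIncrement_nonneg (a := a) (t := t) hs.le
      positivity
    · exact rpow_neg_mul_gammaIncrement_rpow_le hp hs ht ht1
  rwa [integral_const_mul, rpow_neg ht.le, inv_mul_le_iff₀ (rpow_pos_of_pos ht p),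
    mul_comm] at h

theorem gammaIncrement_le_mul_exp (ha : -1 < a) (hs : 0 < s) :
    gammaIncrement a t s ≤ (∫ y in Ioi 0, y ^ a * exp (-(y / 2))) * exp (-(s / 2)) := by
  have hg : IntegrableOn (fun y : ℝ => y ^ a * exp (-(y / 2))) (Ioi 0) := by
    simpa [div_eq_inv_mul] using
      integrableOn_rpow_mul_exp_neg_mul_rpow ha zero_lt_one (inv_pos.2 two_pos)
  have hsub : Ioc s (t + s) ⊆ Ioi 0 := fun y hy => hs.trans hy.1
  calc gammaIncrement a t s
      ≤ ∫ y in Ioc s (t + s), exp (-(s / 2)) * (y ^ a * exp (-(y / 2))) := by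
        refine integral_mono_of_nonneg ?_ ((hg.mono_set hsub).const_mul _) ?_ <;>
          filter_upwards [self_mem_ae_restrict measurableSet_Ioc] with y hy
        · exact mul_nonneg (rpow_nonneg (hs.trans hy.1).le a) (exp_pos _).le
        · have hexp : exp (-y) ≤ exp (-(s / 2)) * exp (-(y / 2)) := by
            rw [← exp_add]
            exact exp_le_exp.2 (by linarith [hy.1])
          calc y ^ a * exp (-y) ≤ y ^ a * (exp (-(s / 2)) * exp (-(y / 2))) :=
                mul_le_mul_of_nonneg_left hexp (rpow_nonneg (hs.trans hy.1).le a)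
            _ = _ := by ring
    _ = exp (-(s / 2)) * ∫ y in Ioc s (t + s), y ^ a * exp (-(y / 2)) := integral_const_mul _ _
    _ ≤ exp (-(s / 2)) * ∫ y in Ioi 0, y ^ a * exp (-(y / 2)) := by
        gcongr
        filter_upwards [self_mem_ae_restrict measurableSet_Ioi] with y (hy : 0 < y)
        exact mul_nonneg (rpow_nonneg hy.le a) (exp_pos _).le
    _ = _ := mul_comm _ _

theorem exists_integral_gammaIncrement_rpow_le (hp : 0 < p) (ha : -1 < a) :
    ∃ A, ∀ t, ∫ s in Ioi 0, gammaIncrement a t s ^ p ≤ A := by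
  set C := ∫ y in Ioi 0, y ^ a * exp (-(y / 2))
  have hC : 0 ≤ C := setIntegral_nonneg measurableSet_Ioi fun y (hy : 0 < y) =>
    mul_nonneg (rpow_nonneg hy.le a) (exp_pos _).le
  have hint : IntegrableOn (fun s : ℝ => (C * exp (-(s / 2))) ^ p) (Ioi 0) := by
    refine IntegrableOn.congr_fun
      ((exp_neg_integrableOn_Ioi 0 (half_pos hp)).const_mul (C ^ p)) (fun s _ => ?_)
      measurableSet_Ioi
    rw [mul_rpow hC (exp_pos _).le, ← exp_mul]
    ring_nf
  refine ⟨∫ s in Ioi 0, (C * exp (-(s / 2))) ^ p, fun t => ?_⟩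
  refine integral_mono_of_nonneg ?_ hint ?_ <;>
    filter_upwards [self_mem_ae_restrict measurableSet_Ioi] with s (hs : 0 < s)
  · exact rpow_nonneg (gammaIncrement_nonneg hs.le) p
  · exact rpow_le_rpow (gammaIncrement_nonneg hs.le) (gammaIncrement_le_mul_exp ha hs) hp.le

end

theorem stmt15 (κ p : ℝ) (hκ : 0 < κ) (hp : 1 ≤ p) (hκp : 1 - 1 / p < κ) :
    MeasureTheory.IntegrableOn (fun s => (s ^ (κ - 1) * Real.exp (-s)) ^ p)
      (Set.Ioi (0:ℝ)) ∧
    Filter.Tendsto (fun t : ℝ => t ^ (-p) *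
        ∫ s in Set.Ioi (0:ℝ), (∫ y in Set.Ioc s (t + s), y ^ (κ - 1) * Real.exp (-y)) ^ p)
      (nhdsWithin 0 (Set.Ioi 0))
      (nhds (∫ s in Set.Ioi (0:ℝ), (s ^ (κ - 1) * Real.exp (-s)) ^ p)) ∧
    ∃ c > 0, ∀ t : ℝ, 0 < t →
      (∫ s in Set.Ioi (0:ℝ), (∫ y in Set.Ioc s (t + s), y ^ (κ - 1) * Real.exp (-y)) ^ p)
        ≤ c * (min t 1) ^ p := by
  have hp0 : 0 < p := by linarith
  have hap : -1 < (κ - 1) * p := by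
    have h := mul_lt_mul_of_pos_right (show -(1 / p) < κ - 1 by linarith) hp0
    rwa [neg_mul, one_div, inv_mul_cancel₀ hp0.ne'] at h
  refine ⟨integrableOn_rpow_mul_exp_neg_rpow_const hp0 hap,
    tendsto_rpow_neg_mul_integral_gammaIncrement_rpow hp0 hap, ?_⟩
  obtain ⟨B, hB⟩ := exists_integral_gammaIncrement_rpow_le_mul_rpow hp0 hap
  obtain ⟨A, hA⟩ := exists_integral_gammaIncrement_rpow_le hp0 (show -1 < κ - 1 by linarith)
  refine ⟨max (max A B) 1, by positivity, fun t ht => ?_⟩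
  rcases le_or_gt t 1 with ht1 | ht1
  · rw [min_eq_left ht1]
    calc _ ≤ B * t ^ p := hB t ⟨ht, ht1⟩
      _ ≤ _ := by gcongr; exact (le_max_right A B).trans (le_max_left _ _)
  · rw [min_eq_right ht1.le, one_rpow, mul_one]
    exact (hA t).trans ((le_max_left A B).trans (le_max_left _ _))
end
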